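/- If H is a spanning subgraph of G, then b_g(G) ≤ b_g(H) and b_g'(G) ≤ b_g'(H). -/
import Mathlib


namespace BurningGame

/-- One spreading phase: all neighbors of burned vertices become burned. -/
noncomputable def spread {V : Type*} [Fintype V] [DecidableEq V] (G : SimpleGraph V) (B : Finset V) : Finset V :=
  ((↑B : Set V) ∪ {v | ∃ u ∈ B, G.Adj u v}).toFinite.toFinset

/-- `EndBy G turn i B k`: starting from burned set `B` at round index `i`
(the player selecting in round `i` is Burner iff `turn i = true`; Burner's selections are
quantified existentially, Staller's universally), Burner can force the game to end
within `k` further rounds. -/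
def EndBy {V : Type*} [Fintype V] [DecidableEq V] (G : SimpleGraph V) (turn : ℕ → Bool) :
    ℕ → Finset V → ℕ → Prop
  | _, B, 0 => B = Finset.univ
  | i, B, k + 1 => B = Finset.univ ∨
      spread G B = Finset.univ ∨
      (if turn i then ∃ v ∉ spread G B, EndBy G turn (i + 1) (insert v (spread G B)) k
       else ∀ v ∉ spread G B, EndBy G turn (i + 1) (insert v (spread G B)) k)

/-- Game burning number relative to a preburned set `S` (Burner starts). -/
noncomputable def bgRel {V : Type*} [Fintype V] [DecidableEq V] (G : SimpleGraph V) (S : Finset V) : ℕ :=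
  sInf {k | EndBy G (fun i => i % 2 == 0) 0 S k}

/-- The game burning number (Burner starts). -/
noncomputable def bg {V : Type*} [Fintype V] [DecidableEq V] (G : SimpleGraph V) : ℕ := bgRel G ∅

/-- The Staller-start game burning number. -/
noncomputable def bg' {V : Type*} [Fintype V] [DecidableEq V] (G : SimpleGraph V) : ℕ :=
  sInf {k | EndBy G (fun i => i % 2 == 1) 0 ∅ k}

/-- The burning number: only Burner plays. -/
noncomputable def burn {V : Type*} [Fintype V] [DecidableEq V] (G : SimpleGraph V) : ℕ :=
  sInf {k | EndBy G (fun _ => true) 0 ∅ k}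

/-- The cooling number: only Staller plays. -/
noncomputable def cool {V : Type*} [Fintype V] [DecidableEq V] (G : SimpleGraph V) : ℕ :=
  sInf {k | EndBy G (fun _ => false) 0 ∅ k}


lemma mem_spread {V : Type*} [Fintype V] [DecidableEq V] {G : SimpleGraph V} {B : Finset V}
    {v : V} : v ∈ spread G B ↔ v ∈ B ∨ ∃ u ∈ B, G.Adj u v := by
  simp [spread, Set.Finite.mem_toFinset]

lemma subset_spread {V : Type*} [Fintype V] [DecidableEq V] (G : SimpleGraph V) (B : Finset V) :
    B ⊆ spread G B := fun v hv => mem_spread.mpr (Or.inl hv)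

lemma spread_mono {V : Type*} [Fintype V] [DecidableEq V] {G H : SimpleGraph V}
    (hHG : H ≤ G) {B B' : Finset V} (hBB : B ⊆ B') : spread H B ⊆ spread G B' := by
  intro v hv
  rcases mem_spread.mp hv with h | ⟨u, hu, hadj⟩
  · exact mem_spread.mpr (Or.inl (hBB h))
  · exact mem_spread.mpr (Or.inr ⟨u, hBB hu, hHG hadj⟩)

lemma endBy_mono {V : Type*} [Fintype V] [DecidableEq V] {G H : SimpleGraph V}
    (hHG : H ≤ G) (turn : ℕ → Bool) :
    ∀ (k i : ℕ) (B B' : Finset V), B ⊆ B' → EndBy H turn i B k → EndBy G turn i B' k := by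
  intro k
  induction k with
  | zero =>
    intro i B B' hBB h
    exact Finset.eq_univ_of_forall fun v => hBB (h ▸ Finset.mem_univ v)
  | succ k ih =>
    intro i B B' hBB h
    have hsp : spread H B ⊆ spread G B' := spread_mono hHG hBB
    rcases h with h | h | h
    · exact Or.inl (Finset.eq_univ_of_forall fun v => hBB (h ▸ Finset.mem_univ v))
    · exact Or.inr (Or.inl (Finset.eq_univ_of_forall fun v => hsp (h ▸ Finset.mem_univ v)))
    · by_cases hGu : spread G B' = Finset.univ
      · exact Or.inr (Or.inl hGu)
      refine Or.inr (Or.inr ?_)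
      cases hT : turn i <;> simp only [hT, Bool.false_eq_true, if_true, if_false] at h ⊢
      · -- Staller's turn
        intro v hv
        have hv' : v ∉ spread H B := fun hc => hv (hsp hc)
        exact ih (i + 1) _ _ (Finset.insert_subset_insert v hsp) (h v hv')
      · -- Burner's turn
        obtain ⟨v, hv, hend⟩ := h
        by_cases hvG : v ∈ spread G B'
        · obtain ⟨w, hw⟩ : ∃ w, w ∉ spread G B' := by
            by_contra hc
            push_neg at hc
            exact hGu (Finset.eq_univ_of_forall hc)
          refine ⟨w, hw, ih (i + 1) _ _ ?_ hend⟩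
          intro x hx
          rcases Finset.mem_insert.mp hx with rfl | hx
          · exact Finset.mem_insert_of_mem hvG
          · exact Finset.mem_insert_of_mem (hsp hx)
        · exact ⟨v, hvG, ih (i + 1) _ _ (Finset.insert_subset_insert v hsp) hend⟩

lemma endBy_card {V : Type*} [Fintype V] [DecidableEq V] (G : SimpleGraph V) (turn : ℕ → Bool) :
    ∀ (k i : ℕ) (B : Finset V), Fintype.card V ≤ B.card + k → EndBy G turn i B k := by
  intro k
  induction k with
  | zero =>
    intro i B hB
    simp only [Nat.add_zero] at hB
    exact Finset.eq_univ_of_card B (le_antisymm (Finset.card_le_univ B) hB)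
  | succ k ih =>
    intro i B hB
    by_cases hGu : spread G B = Finset.univ
    · exact Or.inr (Or.inl hGu)
    refine Or.inr (Or.inr ?_)
    have hkey : ∀ v ∉ spread G B, EndBy G turn (i + 1) (insert v (spread G B)) k := by
      intro v hv
      apply ih
      have h1 : (insert v (spread G B)).card = (spread G B).card + 1 :=
        Finset.card_insert_of_notMem hv
      have h2 : B.card ≤ (spread G B).card := Finset.card_le_card (subset_spread G B)
      omega
    have hne : ∃ v, v ∉ spread G B := by
      by_contra hc
      push_neg at hc
      exact hGu (Finset.eq_univ_of_forall hc)
    cases hT : turn i <;> simp only [hT, Bool.false_eq_true, if_true, if_false]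
    · exact hkey
    · obtain ⟨v, hv⟩ := hne
      exact ⟨v, hv, hkey v hv⟩

theorem stmt6 {V : Type*} [Fintype V] [DecidableEq V] {G H : SimpleGraph V}
    (hHG : H ≤ G) :
    bg G ≤ bg H ∧ bg' G ≤ bg' H := by
  constructor
  · have hne : {k | EndBy H (fun i => i % 2 == 0) 0 (∅ : Finset V) k}.Nonempty :=
      ⟨Fintype.card V, endBy_card H _ _ 0 ∅ (by simp)⟩
    have hmem := Nat.sInf_mem hne
    exact Nat.sInf_le (endBy_mono hHG _ _ 0 ∅ ∅ (by simp) hmem)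
  · have hne : {k | EndBy H (fun i => i % 2 == 1) 0 (∅ : Finset V) k}.Nonempty :=
      ⟨Fintype.card V, endBy_card H _ _ 0 ∅ (by simp)⟩
    have hmem := Nat.sInf_mem hne
    exact Nat.sInf_le (endBy_mono hHG _ _ 0 ∅ ∅ (by simp) hmem)

end BurningGame
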